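/- Under the null hypothesis that X and Y are independent, the L1-type partition statistic L_n satisfies the exponential concentration bound: for all ε1, ε2, ε3 > 0, P(L_n(ν_n, μ_{n,1} × μ_{n,2}) > ε1 + ε2 + ε3) ≤ 2^{m_n m'_n} e^{-n ε1²/2} + 2^{m_n} e^{-n ε2²/2} + 2^{m'_n} e^{-n ε3²/2}. -/

import Mathlib

/-!
For a finite family of disjoint cells `C j`, the L¹ deviation `∑ j |νₙ(C j) - ν(C j)|` of an
empirical measure equals `∑ j s j (νₙ(C j) - ν(C j))` for a suitable sign pattern `s`, i.e. it is
the centred average of the i.i.d. variables `∑ j s j 1_{C j}(Zᵢ) ∈ [-1, 1]`. Hoeffding's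
inequality and a union bound over the `2 ^ #cells` sign patterns bound its tail by
`2 ^ #cells * exp (-n ε² / 2)`.

Under independence the cell `A × B` has probability `μ₁(A) μ₂(B)`, and
`|νₙ - μₙ₁ μₙ₂| ≤ |νₙ - μ₁ μ₂| + μ₂ |μₙ₁ - μ₁| + μₙ₁ |μₙ₂ - μ₂|` splits `Lₙ` into the deviations
of the joint empirical measure on the product cells and of the two marginal ones.
-/

open MeasureTheory ProbabilityTheory Finset Real Function

theorem measureReal_sum_range_sub_integral_ge_le_of_mem_Icc {Ω : Type*} [MeasurableSpace Ω]
    {P : Measure Ω} [IsProbabilityMeasure P] {X : ℕ → Ω → ℝ} (hind : iIndepFun X P)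
    (hX : ∀ i, Measurable (X i)) {a b : ℝ} (hab : ∀ i ω, X i ω ∈ Set.Icc a b) (n : ℕ) {ε : ℝ}
    (hε : 0 ≤ ε) :
    P.real {ω | n * ε ≤ ∑ i ∈ range n, (X i ω - P[X i])} ≤
      exp (-2 * n * ε ^ 2 / (b - a) ^ 2) := by
  have hsubG : ∀ i < n, HasSubgaussianMGF (fun ω ↦ X i ω - P[X i]) ((‖b - a‖₊ / 2) ^ 2) P :=
    fun i _ ↦ hasSubgaussianMGF_of_mem_Icc (hX i).aemeasurable (ae_of_all _ (hab i))
  have hind' : iIndepFun (fun i ω ↦ X i ω - P[X i]) P :=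
    hind.comp (fun i (y : ℝ) ↦ y - ∫ ω, X i ω ∂P) fun i ↦ measurable_id.sub_const _
  refine (HasSubgaussianMGF.measure_sum_range_ge_le_of_iIndepFun hind' hsubG
    (by positivity)).trans_eq ?_
  congr 1
  push_cast
  rw [Real.norm_eq_abs, div_pow, sq_abs]
  rcases eq_or_ne (n : ℝ) 0 with hn | hn
  · simp [hn]
  rcases eq_or_ne (b - a) 0 with hba | hba
  · simp [hba]
  field_simp

noncomputable def empiricalFreq {Ω α : Type*} (Z : ℕ → Ω → α) (n : ℕ) (C : Set α) (ω : Ω) : ℝ :=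
  (∑ i ∈ range n, C.indicator (fun _ ↦ (1 : ℝ)) (Z i ω)) / n

def signPattern {ι : Type*} [DecidableEq ι] (s : Finset ι) (j : ι) : ℝ := if j ∈ s then 1 else -1

section Cells

variable {Ω α ι : Type*} {C : ι → Set α}

lemma natCast_mul_empiricalFreq (Z : ℕ → Ω → α) (n : ℕ) (C : Set α) (ω : Ω) :
    n * empiricalFreq Z n C ω = ∑ i ∈ range n, C.indicator (fun _ ↦ (1 : ℝ)) (Z i ω) := by
  rcases eq_or_ne n 0 with rfl | hn
  · simp
  · exact mul_div_cancel₀ _ (Nat.cast_ne_zero.2 hn)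

lemma empiricalFreq_nonneg (Z : ℕ → Ω → α) (n : ℕ) (C : Set α) (ω : Ω) :
    0 ≤ empiricalFreq Z n C ω :=
  div_nonneg (sum_nonneg fun _ _ ↦ Set.indicator_nonneg (fun _ _ ↦ zero_le_one) _) n.cast_nonneg

lemma sum_indicator_le_one (hC : Pairwise (Disjoint on C)) (s : Finset ι) (x : α) :
    ∑ j ∈ s, (C j).indicator (fun _ ↦ (1 : ℝ)) x ≤ 1 := by
  rw [← Finset.indicator_biUnion_apply s C (hC.set_pairwise _)]
  exact Set.indicator_apply_le' (fun _ ↦ le_rfl) fun _ ↦ zero_le_one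

lemma abs_sum_mul_indicator_le_one [Fintype ι] (hC : Pairwise (Disjoint on C)) {w : ι → ℝ}
    (hw : ∀ j, |w j| ≤ 1) (x : α) :
    |∑ j, w j * (C j).indicator (fun _ ↦ (1 : ℝ)) x| ≤ 1 :=
  calc |∑ j, w j * (C j).indicator (fun _ ↦ (1 : ℝ)) x|
      ≤ ∑ j, |w j| * (C j).indicator (fun _ ↦ (1 : ℝ)) x := by
        refine (abs_sum_le_sum_abs _ _).trans_eq (sum_congr rfl fun j _ ↦ ?_)
        rw [abs_mul, abs_of_nonneg (Set.indicator_nonneg (fun _ _ ↦ zero_le_one) x)]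
    _ ≤ ∑ j, (C j).indicator (fun _ ↦ (1 : ℝ)) x :=
        sum_le_sum fun j _ ↦
          mul_le_of_le_one_left (Set.indicator_nonneg (fun _ _ ↦ zero_le_one) x) (hw j)
    _ ≤ 1 := sum_indicator_le_one hC _ x

lemma sum_empiricalFreq_le_one [Fintype ι] (hC : Pairwise (Disjoint on C)) (Z : ℕ → Ω → α) (n : ℕ)
    (ω : Ω) : ∑ j, empiricalFreq Z n (C j) ω ≤ 1 := by
  unfold empiricalFreq
  rw [← sum_div, sum_comm]
  refine div_le_one_of_le₀ ?_ n.cast_nonneg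
  calc ∑ i ∈ range n, ∑ j, (C j).indicator (fun _ ↦ (1 : ℝ)) (Z i ω)
      ≤ ∑ i ∈ range n, (1 : ℝ) := sum_le_sum fun i _ ↦ sum_indicator_le_one hC _ _
    _ = n := by simp

lemma exists_sum_abs_eq_sum_signPattern_mul [Fintype ι] [DecidableEq ι] (δ : ι → ℝ) :
    ∃ s : Finset ι, ∑ j, |δ j| = ∑ j, signPattern s j * δ j := by
  classical
  refine ⟨univ.filter (0 ≤ δ ·), sum_congr rfl fun j _ ↦ ?_⟩
  by_cases h : 0 ≤ δ j
  · simp [signPattern, h, abs_of_nonneg h]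
  · simp [signPattern, h, abs_of_neg (not_le.1 h)]

lemma sum_range_sum_mul_indicator [Fintype ι] (Z : ℕ → Ω → α) (n : ℕ) (w : ι → ℝ) (ω : Ω) :
    ∑ i ∈ range n, ∑ j, w j * (C j).indicator (fun _ ↦ (1 : ℝ)) (Z i ω) =
      n * ∑ j, w j * empiricalFreq Z n (C j) ω := by
  simp_rw [mul_sum, mul_left_comm (n : ℝ), natCast_mul_empiricalFreq, mul_sum]
  exact sum_comm

lemma empiricalFreq_prod {β : Type*} (X : ℕ → Ω → α) (Y : ℕ → Ω → β) (n : ℕ) (A : Set α) (B : Set β)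
    (ω : Ω) :
    empiricalFreq (fun i ω ↦ (X i ω, Y i ω)) n (A ×ˢ B) ω =
      (∑ i ∈ range n, A.indicator (fun _ ↦ (1 : ℝ)) (X i ω) *
        B.indicator (fun _ ↦ (1 : ℝ)) (Y i ω)) / n := by
  simp only [empiricalFreq]
  congr! 2 with i
  exact Set.indicator_prod_one

variable [MeasurableSpace Ω] [MeasurableSpace α] {P : Measure Ω} [IsProbabilityMeasure P]

lemma integral_sum_mul_indicator_comp [Fintype ι] {Z : Ω → α} (hZ : Measurable Z)
    (hC : ∀ j, MeasurableSet (C j)) (w : ι → ℝ) :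
    ∫ ω, ∑ j, w j * (C j).indicator (fun _ ↦ (1 : ℝ)) (Z ω) ∂P =
      ∑ j, w j * P.real (Z ⁻¹' C j) := by
  rw [integral_finsetSum]
  · refine sum_congr rfl fun j _ ↦ ?_
    rw [integral_const_mul]
    congr 1
    exact integral_indicator_one (hZ (hC j))
  · exact fun j _ ↦ ((integrable_const (1 : ℝ)).indicator (hZ (hC j))).const_mul _

theorem measureReal_sum_abs_empiricalFreq_sub_gt_le [Fintype ι] {Z : ℕ → Ω → α}
    (hZ : ∀ i, Measurable (Z i)) (hid : ∀ i, IdentDistrib (Z i) (Z 0) P P)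
    (hind : iIndepFun Z P) (hC : ∀ j, MeasurableSet (C j)) (hdisj : Pairwise (Disjoint on C))
    (n : ℕ) {ε : ℝ} (hε : 0 ≤ ε) :
    P.real {ω | ε < ∑ j, |empiricalFreq Z n (C j) ω - P.real (Z 0 ⁻¹' C j)|} ≤
      2 ^ Fintype.card ι * exp (-n * ε ^ 2 / 2) := by
  classical
  set f : Finset ι → α → ℝ := fun s x ↦ ∑ j, signPattern s j * (C j).indicator (fun _ ↦ 1) x
  have hf : ∀ s, Measurable (f s) := fun s ↦
    Finset.measurable_sum _ fun j _ ↦ (measurable_const.indicator (hC j)).const_mul _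
  have hf_mem : ∀ s x, f s x ∈ Set.Icc (-1) 1 := fun s x ↦
    abs_le.1 <| abs_sum_mul_indicator_le_one hdisj
      (fun j ↦ by unfold signPattern; split_ifs <;> simp) x
  have hf_integral : ∀ s i, P[fun ω ↦ f s (Z i ω)] = ∑ j, signPattern s j * P.real (Z 0 ⁻¹' C j) :=
    fun s i ↦ (((hid i).comp (hf s)).integral_eq).trans
      (integral_sum_mul_indicator_comp (hZ 0) hC _)
  have hcover : {ω | ε < ∑ j, |empiricalFreq Z n (C j) ω - P.real (Z 0 ⁻¹' C j)|} ⊆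
      ⋃ s, {ω | n * ε ≤ ∑ i ∈ range n, (f s (Z i ω) - P[fun ω ↦ f s (Z i ω)])} := by
    intro ω hω
    obtain ⟨s, hs⟩ := exists_sum_abs_eq_sum_signPattern_mul
      fun j ↦ empiricalFreq Z n (C j) ω - P.real (Z 0 ⁻¹' C j)
    refine Set.mem_iUnion.2 ⟨s, ?_⟩
    have hsum : ∑ i ∈ range n, (f s (Z i ω) - P[fun ω ↦ f s (Z i ω)]) =
        n * ∑ j, signPattern s j * (empiricalFreq Z n (C j) ω - P.real (Z 0 ⁻¹' C j)) := by
      rw [sum_sub_distrib]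
      simp only [hf_integral, sum_const, card_range, nsmul_eq_mul, f]
      rw [sum_range_sum_mul_indicator, ← mul_sub, ← sum_sub_distrib]
      simp only [mul_sub]
    simp only [Set.mem_ofPred_eq, hsum, ← hs] at hω ⊢
    exact mul_le_mul_of_nonneg_left hω.le n.cast_nonneg
  calc _ ≤ P.real (⋃ s, {ω | n * ε ≤ ∑ i ∈ range n, (f s (Z i ω) - P[fun ω ↦ f s (Z i ω)])}) :=
        measureReal_mono hcover
    _ ≤ ∑ s, P.real {ω | n * ε ≤ ∑ i ∈ range n, (f s (Z i ω) - P[fun ω ↦ f s (Z i ω)])} :=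
        measureReal_iUnion_fintype_le _
    _ ≤ ∑ _s : Finset ι, exp (-n * ε ^ 2 / 2) := by
        refine sum_le_sum fun s _ ↦ ?_
        refine (measureReal_sum_range_sub_integral_ge_le_of_mem_Icc
          (hind.comp (fun _ ↦ f s) fun _ ↦ hf s) (fun i ↦ (hf s).comp (hZ i))
          (fun i ω ↦ hf_mem s (Z i ω)) n hε).trans_eq ?_
        congr 1
        ring
    _ = 2 ^ Fintype.card ι * exp (-n * ε ^ 2 / 2) := by
        simp [Fintype.card_finset]

end Cells

lemma sum_abs_sub_mul_le {ι κ : Type*} [Fintype ι] [Fintype κ] (c : ι → κ → ℝ) (a p : ι → ℝ)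
    (b q : κ → ℝ) (ha : ∀ j, 0 ≤ a j) (hq : ∀ k, 0 ≤ q k) (ha_sum : ∑ j, a j ≤ 1)
    (hq_sum : ∑ k, q k ≤ 1) :
    ∑ j, ∑ k, |c j k - a j * b k| ≤
      ∑ j, ∑ k, |c j k - p j * q k| + ∑ j, |a j - p j| + ∑ k, |b k - q k| := by
  have hpoint : ∀ j k, |c j k - a j * b k| ≤
      |c j k - p j * q k| + q k * |a j - p j| + a j * |b k - q k| := fun j k ↦
    calc |c j k - a j * b k|
        = |(c j k - p j * q k) + q k * (p j - a j) + a j * (q k - b k)| := by ring_nf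
      _ ≤ |c j k - p j * q k| + |q k * (p j - a j)| + |a j * (q k - b k)| := abs_add_three _ _ _
      _ = _ := by
        rw [abs_mul, abs_mul, abs_of_nonneg (hq k), abs_of_nonneg (ha j), abs_sub_comm (p j),
          abs_sub_comm (q k)]
  calc ∑ j, ∑ k, |c j k - a j * b k|
      ≤ ∑ j, ∑ k, (|c j k - p j * q k| + q k * |a j - p j| + a j * |b k - q k|) :=
        sum_le_sum fun j _ ↦ sum_le_sum fun k _ ↦ hpoint j k
    _ = ∑ j, ∑ k, |c j k - p j * q k| + (∑ k, q k) * ∑ j, |a j - p j| +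
          (∑ j, a j) * ∑ k, |b k - q k| := by
        rw [sum_mul, sum_mul]
        simp only [sum_add_distrib, mul_sum]
        rw [sum_comm (f := fun j k ↦ q k * |a j - p j|)]
    _ ≤ _ := by
        gcongr
        · exact mul_le_of_le_one_left (sum_nonneg fun _ _ ↦ abs_nonneg _) hq_sum
        · exact mul_le_of_le_one_left (sum_nonneg fun _ _ ↦ abs_nonneg _) ha_sum

lemma pairwise_disjoint_prod {α β ι κ : Type*} {A : ι → Set α} {B : κ → Set β}
    (hA : Pairwise (Disjoint on A)) (hB : Pairwise (Disjoint on B)) :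
    Pairwise (Disjoint on fun p : ι × κ ↦ A p.1 ×ˢ B p.2) := fun p q hpq ↦
  Set.disjoint_prod.2 <| by
    by_cases h : p.1 = q.1
    · exact .inr (hB fun h' ↦ hpq (Prod.ext h h'))
    · exact .inl (hA h)

lemma measureReal_preimage_prod_of_indepFun {Ω α β : Type*} [MeasurableSpace Ω]
    [MeasurableSpace α] [MeasurableSpace β] {P : Measure Ω} {X : Ω → α} {Y : Ω → β}
    (hXY : IndepFun X Y P) {A : Set α} {B : Set β} (hA : MeasurableSet A) (hB : MeasurableSet B) :
    P.real ((fun ω ↦ (X ω, Y ω)) ⁻¹' A ×ˢ B) = P.real (X ⁻¹' A) * P.real (Y ⁻¹' B) := by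
  rw [Set.mk_preimage_prod, measureReal_def, hXY.measure_inter_preimage_eq_mul _ _ hA hB,
    ENNReal.toReal_mul, measureReal_def, measureReal_def]

section Product

variable {Ω α β ι κ : Type*} [MeasurableSpace Ω] [MeasurableSpace α] [MeasurableSpace β]
  [Fintype ι] [Fintype κ] {P : Measure Ω} [IsProbabilityMeasure P]
  {A : ι → Set α} {B : κ → Set β}

lemma sum_measureReal_preimage_le_one {Z : Ω → α} (hZ : Measurable Z)
    (hA : ∀ j, MeasurableSet (A j)) (hdisj : Pairwise (Disjoint on A)) :
    ∑ j, P.real (Z ⁻¹' A j) ≤ 1 := by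
  rw [← measureReal_iUnion_fintype (fun j k hjk ↦ (hdisj hjk).preimage Z) fun j ↦ hZ (hA j)]
  exact measureReal_le_one

lemma sum_abs_empiricalFreq_prod_sub_mul_le {X : ℕ → Ω → α} {Y : ℕ → Ω → β}
    (hY : Measurable (Y 0)) (hXY : IndepFun (X 0) (Y 0) P) (hA : ∀ j, MeasurableSet (A j))
    (hB : ∀ k, MeasurableSet (B k)) (hAdisj : Pairwise (Disjoint on A))
    (hBdisj : Pairwise (Disjoint on B)) (n : ℕ) (ω : Ω) :
    ∑ j, ∑ k, |empiricalFreq (fun i ω ↦ (X i ω, Y i ω)) n (A j ×ˢ B k) ω -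
        empiricalFreq X n (A j) ω * empiricalFreq Y n (B k) ω| ≤
      ∑ p : ι × κ, |empiricalFreq (fun i ω ↦ (X i ω, Y i ω)) n (A p.1 ×ˢ B p.2) ω -
          P.real ((fun ω ↦ (X 0 ω, Y 0 ω)) ⁻¹' A p.1 ×ˢ B p.2)| +
        ∑ j, |empiricalFreq X n (A j) ω - P.real (X 0 ⁻¹' A j)| +
        ∑ k, |empiricalFreq Y n (B k) ω - P.real (Y 0 ⁻¹' B k)| := by
  simp only [Fintype.sum_prod_type, measureReal_preimage_prod_of_indepFun hXY (hA _) (hB _)]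
  exact sum_abs_sub_mul_le _ _ _ _ _ (fun j ↦ empiricalFreq_nonneg X n (A j) ω)
    (fun k ↦ measureReal_nonneg) (sum_empiricalFreq_le_one hAdisj X n ω)
    (sum_measureReal_preimage_le_one hY hB hBdisj)

end Product

theorem stmt0_general
    {Ω : Type*} [MeasurableSpace Ω] (P : Measure Ω) [IsProbabilityMeasure P]
    {d d' : ℕ} (X : ℕ → Ω → (Fin d → ℝ)) (Y : ℕ → Ω → (Fin d' → ℝ))
    (hmeas : ∀ i, Measurable (X i) ∧ Measurable (Y i))
    (hiid : ∀ i, IdentDistrib (fun ω => (X i ω, Y i ω)) (fun ω => (X 0 ω, Y 0 ω)) P P)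
    (hindep : iIndepFun (fun i ω => (X i ω, Y i ω)) P)
    (hXY : ∀ i, IndepFun (X i) (Y i) P)
    (m m' : ℕ) (A : Fin m → Set (Fin d → ℝ)) (B : Fin m' → Set (Fin d' → ℝ))
    (hA : ∀ j, MeasurableSet (A j)) (hB : ∀ k, MeasurableSet (B k))
    (hAdisj : Pairwise (Function.onFun Disjoint A))
    (hBdisj : Pairwise (Function.onFun Disjoint B))
    (n : ℕ)
    (L : Ω → ℝ)
    (hL : ∀ ω, L ω = ∑ j, ∑ k,
      |(∑ i ∈ Finset.range n, Set.indicator (A j) (fun _ => (1:ℝ)) (X i ω)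
          * Set.indicator (B k) (fun _ => (1:ℝ)) (Y i ω)) / n
        - ((∑ i ∈ Finset.range n, Set.indicator (A j) (fun _ => (1:ℝ)) (X i ω)) / n)
          * ((∑ i ∈ Finset.range n, Set.indicator (B k) (fun _ => (1:ℝ)) (Y i ω)) / n)|)
    (ε1 ε2 ε3 : ℝ) (hε1 : 0 < ε1) (hε2 : 0 < ε2) (hε3 : 0 < ε3) :
    (P {ω | L ω > ε1 + ε2 + ε3}).toReal ≤
      2 ^ (m * m') * Real.exp (-(n : ℝ) * ε1 ^ 2 / 2)
      + 2 ^ m * Real.exp (-(n : ℝ) * ε2 ^ 2 / 2)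
      + 2 ^ m' * Real.exp (-(n : ℝ) * ε3 ^ 2 / 2) := by
  have hX : ∀ i, Measurable (X i) := fun i ↦ (hmeas i).1
  have hY : ∀ i, Measurable (Y i) := fun i ↦ (hmeas i).2
  have hXY_freq := measureReal_sum_abs_empiricalFreq_sub_gt_le
    (fun i ↦ (hX i).prodMk (hY i)) hiid hindep (fun p : Fin m × Fin m' ↦ (hA p.1).prod (hB p.2))
    (pairwise_disjoint_prod hAdisj hBdisj) n hε1.le
  have hX_freq := measureReal_sum_abs_empiricalFreq_sub_gt_le hX
    (fun i ↦ (hiid i).comp measurable_fst) (hindep.comp (fun _ ↦ Prod.fst) fun _ ↦ measurable_fst)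
    hA hAdisj n hε2.le
  have hY_freq := measureReal_sum_abs_empiricalFreq_sub_gt_le hY
    (fun i ↦ (hiid i).comp measurable_snd) (hindep.comp (fun _ ↦ Prod.snd) fun _ ↦ measurable_snd)
    hB hBdisj n hε3.le
  rw [Fintype.card_prod, Fintype.card_fin, Fintype.card_fin] at hXY_freq
  rw [Fintype.card_fin] at hX_freq hY_freq
  refine (measureReal_mono fun ω hω ↦ ?_).trans <| (measureReal_union_le _ _).trans <|
    add_le_add ((measureReal_union_le _ _).trans (add_le_add hXY_freq hX_freq)) hY_freq
  have hLω : L ω = ∑ j, ∑ k, |empiricalFreq (fun i ω ↦ (X i ω, Y i ω)) n (A j ×ˢ B k) ω -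
      empiricalFreq X n (A j) ω * empiricalFreq Y n (B k) ω| := by
    simp only [hL, empiricalFreq_prod]
    rfl
  have hL_le := sum_abs_empiricalFreq_prod_sub_mul_le (hY 0) (hXY 0) hA hB hAdisj hBdisj n ω
  simp only [Set.mem_union, Set.mem_ofPred_eq] at hω ⊢
  by_contra! h
  linarith

/-- Under independence of X and Y, the partition L1 statistic satisfies
`P(L_n > ε1+ε2+ε3) ≤ 2^(m m') e^{-nε1²/2} + 2^m e^{-nε2²/2} + 2^{m'} e^{-nε3²/2}`. -/
theorem stmt0
    {Ω : Type*} [MeasurableSpace Ω] (P : Measure Ω) [IsProbabilityMeasure P]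
    {d d' : ℕ} (X : ℕ → Ω → (Fin d → ℝ)) (Y : ℕ → Ω → (Fin d' → ℝ))
    (hmeas : ∀ i, Measurable (X i) ∧ Measurable (Y i))
    (hiid : ∀ i, IdentDistrib (fun ω => (X i ω, Y i ω)) (fun ω => (X 0 ω, Y 0 ω)) P P)
    (hindep : iIndepFun (fun i ω => (X i ω, Y i ω)) P)
    (hXY : ∀ i, IndepFun (X i) (Y i) P)
    (m m' : ℕ) (A : Fin m → Set (Fin d → ℝ)) (B : Fin m' → Set (Fin d' → ℝ))
    (hA : ∀ j, MeasurableSet (A j)) (hB : ∀ k, MeasurableSet (B k))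
    (hAdisj : Pairwise (Function.onFun Disjoint A)) (hAcov : (⋃ j, A j) = Set.univ)
    (hBdisj : Pairwise (Function.onFun Disjoint B)) (hBcov : (⋃ k, B k) = Set.univ)
    (n : ℕ) (hn : 0 < n)
    (L : Ω → ℝ)
    (hL : ∀ ω, L ω = ∑ j, ∑ k,
      |(∑ i ∈ Finset.range n, Set.indicator (A j) (fun _ => (1:ℝ)) (X i ω)
          * Set.indicator (B k) (fun _ => (1:ℝ)) (Y i ω)) / n
        - ((∑ i ∈ Finset.range n, Set.indicator (A j) (fun _ => (1:ℝ)) (X i ω)) / n)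
          * ((∑ i ∈ Finset.range n, Set.indicator (B k) (fun _ => (1:ℝ)) (Y i ω)) / n)|)
    (ε1 ε2 ε3 : ℝ) (hε1 : 0 < ε1) (hε2 : 0 < ε2) (hε3 : 0 < ε3) :
    (P {ω | L ω > ε1 + ε2 + ε3}).toReal ≤
      2 ^ (m * m') * Real.exp (-(n : ℝ) * ε1 ^ 2 / 2)
      + 2 ^ m * Real.exp (-(n : ℝ) * ε2 ^ 2 / 2)
      + 2 ^ m' * Real.exp (-(n : ℝ) * ε3 ^ 2 / 2) :=
  stmt0_general P X Y hmeas hiid hindep hXY m m' A B hA hB hAdisj hBdisj n L hL ε1 ε2 ε3 hε1 hε2 hε3
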